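/- arXiv:2207.07804 — 6 statements merged into one kernel-verified Lean document; each statement's English description precedes it below -/
import Mathlib

section
/- Let p be a prime with p ≡ 1 (mod 6). Then (∏_{1 ≤ i ≤ (p²−1)/3, p ∤ i} i)^(p−1) ≡ 1 (mod p²) if and only if (∏_{1 ≤ i ≤ (p²−1)/6, p ∤ i} i)^(p−1) ≡ 1 (mod p²). (That is, p is 1-exceptional for m = 3 if and only if p is 1-exceptional for m = 6.) -/
/-!
Write `p = 6k + 1` and `p² = 6n + 1`, so `n = k(p + 1)`, and work in `ZMod (p²)` with
`B = n_p!`, `C = (2n)_p! / n_p!`, `D = (3n)_p! / (2n)_p!`, so that the two Gauss factorials of the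
statement are `BC` and `B`. Splitting `(2n)_p!` into even factors `2j` and odd factors
`p² - 2j` gives `(2n)_p! = (-4)^{kp} B D`, hence `C = (-4)^{kp} D` and `C^{p-1} = D^{p-1}` by
Euler's theorem. Pairing `i` with `p² - i` shows `(3n)_p!² = ±(p² - 1)_p!`, a product of all
units, whose square is `1`; so `(BCD)⁴ = 1`. A `(p-1)`-th power of a unit has order dividing `p`,
so with `x = B^{p-1}` and `y = C^{p-1}` this gives `x y² = 1`, and then
`xy = 1 ↔ y = 1 ↔ x = 1`.
-/

open Finset

theorem Nat.dvd_iff_dvd_of_add_eq {p x y M : ℕ} (hM : p ∣ M) (h : x + y = M) :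
    p ∣ x ↔ p ∣ y := by
  subst h
  exact ⟨fun hx => (Nat.dvd_add_right hx).mp hM, fun hy => (Nat.dvd_add_left hy).mp hM⟩

theorem natCast_eq_neg_of_add_eq {R : Type*} [AddGroupWithOne R] {x y M : ℕ}
    (hR : (M : R) = 0) (h : x + y = M) : (x : R) = -y :=
  eq_neg_of_add_eq_zero_left (by rw [← Nat.cast_add, h, hR])

theorem prod_univ_sq_eq_one {G : Type*} [CommGroup G] [Fintype G] : (∏ g : G, g) ^ 2 = 1 := by
  have h : ∏ g : G, g⁻¹ = ∏ g : G, g := Fintype.prod_equiv (Equiv.inv G) _ _ fun _ => rfl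
  rw [prod_inv_distrib, inv_eq_iff_mul_eq_one] at h
  rw [sq, h]

theorem ZMod.pow_totient_of_isUnit {N : ℕ} {z : ZMod N} (hz : IsUnit z) : z ^ N.totient = 1 := by
  obtain ⟨u, rfl⟩ := hz
  rw [← Units.val_pow_eq_pow_val, ZMod.pow_totient, Units.val_one]

theorem mul_eq_one_iff_of_mul_sq_eq_one {M : Type*} [CommMonoid M] {x y : M} (h : x * y ^ 2 = 1)
    (hy : y ^ 2 = 1 → y = 1) : x * y = 1 ↔ x = 1 := by
  constructor
  · intro hxy
    have hy1 : y = 1 := calc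
      y = x * y * y := by rw [hxy, one_mul]
      _ = x * y ^ 2 := by rw [mul_assoc, sq]
      _ = 1 := h
    rwa [hy1, mul_one] at hxy
  · intro hx
    rw [hx, one_mul] at h ⊢
    exact hy h

namespace GaussFactorial

def coprimeIoc (p a b : ℕ) : Finset ℕ := {i ∈ Ioc a b | ¬ p ∣ i}

/-- `gaussProd R p 0 N` is the Gauss factorial `N_p!` cast to `R`; in general it is
`b_p! / a_p!`. -/
def gaussProd (R : Type*) [CommSemiring R] (p a b : ℕ) : R := ∏ i ∈ coprimeIoc p a b, (i : R)

variable {p : ℕ}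

@[simp]
theorem mem_coprimeIoc {a b i : ℕ} :
    i ∈ coprimeIoc p a b ↔ (a < i ∧ i ≤ b) ∧ ¬ p ∣ i := by
  rw [coprimeIoc, mem_filter, mem_Ioc]

theorem disjoint_coprimeIoc (a b c : ℕ) : Disjoint (coprimeIoc p a b) (coprimeIoc p b c) :=
  disjoint_filter_filter (Ioc_disjoint_Ioc_of_le le_rfl)

theorem coprimeIoc_union {a b c : ℕ} (hab : a ≤ b) (hbc : b ≤ c) :
    coprimeIoc p a b ∪ coprimeIoc p b c = coprimeIoc p a c := by
  rw [coprimeIoc, coprimeIoc, ← filter_union, Ioc_union_Ioc_eq_Ioc hab hbc, coprimeIoc]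

theorem card_coprimeIoc_add {a b c : ℕ} (hab : a ≤ b) (hbc : b ≤ c) :
    #(coprimeIoc p a b) + #(coprimeIoc p b c) = #(coprimeIoc p a c) := by
  rw [← card_union_of_disjoint (disjoint_coprimeIoc a b c), coprimeIoc_union hab hbc]

theorem card_coprimeIoc_zero (p m : ℕ) : #(coprimeIoc p 0 m) = m - m / p := by
  rw [coprimeIoc, filter_not, card_sdiff_of_subset (filter_subset _ _), Nat.card_Ioc,
    Nat.Ioc_filter_dvd_card_eq_div, Nat.sub_zero]

theorem card_coprimeIoc_mul_succ {q : ℕ} (hq : q < p) :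
    #(coprimeIoc p 0 (q * (p + 1))) = q * p := by
  rw [card_coprimeIoc_zero, mul_comm, add_one_mul, Nat.mul_add_div (by omega),
    Nat.div_eq_of_lt hq, Nat.add_zero, Nat.add_sub_cancel, mul_comm]

theorem gaussProd_mul (R : Type*) [CommSemiring R] {a b c : ℕ} (hab : a ≤ b) (hbc : b ≤ c) :
    gaussProd R p a b * gaussProd R p b c = gaussProd R p a c := by
  rw [gaussProd, gaussProd, ← prod_union (disjoint_coprimeIoc a b c), coprimeIoc_union hab hbc,
    gaussProd]

theorem prod_coprimeIoc_even (R : Type*) [CommSemiring R] (hp : Odd p) (a b : ℕ) :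
    ∏ i ∈ coprimeIoc p (2 * a) (2 * b) with 2 ∣ i, (i : R) =
      2 ^ #(coprimeIoc p a b) * gaussProd R p a b := by
  have hp2 : p.Coprime 2 := Nat.coprime_two_right.mpr hp
  rw [gaussProd, ← prod_const, ← prod_mul_distrib]
  refine prod_nbij' (· / 2) (2 * ·) ?_ ?_ ?_ ?_ ?_ <;> simp only [mem_filter, mem_coprimeIoc]
  · rintro _ ⟨⟨hi, hpi⟩, j, rfl⟩
    rw [hp2.dvd_mul_left] at hpi
    simp only [Nat.mul_div_cancel_left j two_pos]
    omega
  · rintro j ⟨hj, hpj⟩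
    rw [hp2.dvd_mul_left]
    exact ⟨⟨by omega, hpj⟩, dvd_mul_right 2 j⟩
  · rintro _ ⟨-, j, rfl⟩
    simp
  · intro j _
    simp
  · rintro _ ⟨-, j, rfl⟩
    simp

section

variable (R : Type*) [CommRing R] {c : ℕ} (hp : p ∣ 2 * c + 1)
  (hR : ((2 * c + 1 : ℕ) : R) = 0)
include hp hR

theorem prod_coprimeIoc_odd {d n : ℕ} (hdn : d + n = c) :
    ∏ i ∈ coprimeIoc p 0 (2 * n) with ¬ 2 ∣ i, (i : R) =
      (-2) ^ #(coprimeIoc p d c) * gaussProd R p d c := by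
  have hp2 : p.Coprime 2 := Nat.coprime_two_right.mpr
    (Odd.of_dvd_nat (odd_two_mul_add_one c) hp)
  rw [gaussProd, ← prod_const, ← prod_mul_distrib]
  refine prod_nbij' (fun i => (2 * c + 1 - i) / 2) (fun j => 2 * c + 1 - 2 * j) ?_ ?_ ?_ ?_ ?_ <;>
    simp only [mem_filter, mem_coprimeIoc]
  · rintro i ⟨⟨hi, hpi⟩, hi2⟩
    refine ⟨by omega, fun h => hpi ?_⟩
    exact (Nat.dvd_iff_dvd_of_add_eq hp (by omega)).mp (dvd_mul_of_dvd_right h 2)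
  · rintro j ⟨hj, hpj⟩
    rw [Nat.dvd_iff_dvd_of_add_eq hp (by omega : 2 * c + 1 - 2 * j + 2 * j = _), hp2.dvd_mul_left]
    omega
  · intro i ⟨⟨hi, _⟩, hi2⟩
    omega
  · intro j ⟨hj, _⟩
    omega
  · rintro i ⟨⟨hi, _⟩, hi2⟩
    rw [natCast_eq_neg_of_add_eq hR (by omega : i + 2 * ((2 * c + 1 - i) / 2) = _)]
    push_cast
    ring

theorem gaussProd_reflect :
    gaussProd R p c (2 * c) = (-1) ^ #(coprimeIoc p 0 c) * gaussProd R p 0 c := by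
  rw [gaussProd, gaussProd, ← prod_const, ← prod_mul_distrib]
  refine prod_nbij' (fun i => 2 * c + 1 - i) (fun j => 2 * c + 1 - j) ?_ ?_ ?_ ?_ ?_ <;>
    simp only [mem_coprimeIoc]
  · rintro i ⟨hi, hpi⟩
    rw [Nat.dvd_iff_dvd_of_add_eq hp (by omega : 2 * c + 1 - i + i = _)]
    omega
  · rintro j ⟨hj, hpj⟩
    rw [Nat.dvd_iff_dvd_of_add_eq hp (by omega : 2 * c + 1 - j + j = _)]
    omega
  · intro i ⟨hi, _⟩
    omega
  · intro j ⟨hj, _⟩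
    omega
  · rintro i ⟨hi, _⟩
    rw [natCast_eq_neg_of_add_eq hR (by omega : i + (2 * c + 1 - i) = _)]
    ring

end

section

variable (hp : p.Prime) {k : ℕ} (hk : 0 < k)
include hp hk

theorem isUnit_gaussProd (a b : ℕ) : IsUnit (gaussProd (ZMod (p ^ k)) p a b) :=
  IsUnit.prod_iff.mpr fun _ hi =>
    (ZMod.isUnit_natCast_iff_not_dvd_pow hp hk).mpr (mem_coprimeIoc.mp hi).2

theorem gaussProd_sq_eq_one : gaussProd (ZMod (p ^ k)) p 0 (p ^ k - 1) ^ 2 = 1 := by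
  have : NeZero (p ^ k) := ⟨pow_ne_zero k hp.ne_zero⟩
  have hunit {i : ℕ} (hi : ¬ p ∣ i) : IsUnit (i : ZMod (p ^ k)) :=
    (ZMod.isUnit_natCast_iff_not_dvd_pow hp hk).mpr hi
  have hprod : gaussProd (ZMod (p ^ k)) p 0 (p ^ k - 1) =
      ∏ u : (ZMod (p ^ k))ˣ, (u : ZMod (p ^ k)) := by
    rw [gaussProd]
    refine prod_bij' (fun i hi => (hunit (mem_coprimeIoc.mp hi).2).unit)
      (fun u _ => (u : ZMod (p ^ k)).val) ?_ ?_ ?_ ?_ ?_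
    · exact fun _ _ => mem_univ _
    · intro u _
      have hpu : ¬ p ∣ (u : ZMod (p ^ k)).val := by
        rw [← ZMod.isUnit_natCast_iff_not_dvd_pow hp hk, ZMod.natCast_zmod_val]
        exact u.isUnit
      have hlt := ZMod.val_lt (u : ZMod (p ^ k))
      exact mem_coprimeIoc.mpr
        ⟨⟨Nat.pos_of_ne_zero fun h => hpu (h ▸ dvd_zero p), by omega⟩, hpu⟩
    · intro i hi
      have := (mem_coprimeIoc.mp hi).1
      exact ZMod.val_cast_of_lt (by omega)
    · intro u _
      ext
      exact ZMod.natCast_zmod_val _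
    · intro i _
      rfl
  rw [hprod, ← Units.coe_prod, ← Units.val_pow_eq_pow_val, prod_univ_sq_eq_one, Units.val_one]

end

section

variable (hp : p.Prime)
include hp

theorem pow_mul_pred_eq_one {z : ZMod (p ^ 2)} (hz : IsUnit z) : z ^ (p * (p - 1)) = 1 := by
  rw [← ZMod.pow_totient_of_isUnit hz]
  simp [Nat.totient_prime_pow hp two_pos]

theorem pow_pred_eq_one_of_pow_eq_one {z : ZMod (p ^ 2)} (hz : IsUnit z) {m : ℕ}
    (hm : p.Coprime m) (h : (z ^ (p - 1)) ^ m = 1) : z ^ (p - 1) = 1 := by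
  refine (pow_eq_one_iff_of_coprime hm).mp ⟨?_, h⟩
  rw [← pow_mul, mul_comm, pow_mul_pred_eq_one hp hz]

theorem gaussProd_half_pow_four {c : ℕ} (hc : p ^ 2 = 2 * c + 1) :
    gaussProd (ZMod (p ^ 2)) p 0 c ^ 4 = 1 := by
  have hfull := gaussProd_sq_eq_one hp two_pos
  rw [show p ^ 2 - 1 = 2 * c by omega, ← gaussProd_mul _ (Nat.zero_le c) (by omega : c ≤ 2 * c),
    gaussProd_reflect _ (hc ▸ dvd_pow_self p two_ne_zero) (hc ▸ ZMod.natCast_self _)] at hfull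
  have hsign : ((-1 : ZMod (p ^ 2)) ^ #(coprimeIoc p 0 c)) ^ 2 = 1 := by
    rw [← pow_mul, mul_comm, pow_mul, neg_one_sq, one_pow]
  linear_combination hfull - gaussProd (ZMod (p ^ 2)) p 0 c ^ 4 * hsign

variable {k n : ℕ} (hpk : p = 6 * k + 1) (hn : n = k * (p + 1))
include hpk hn

theorem gaussProd_mid_eq :
    gaussProd (ZMod (p ^ 2)) p n (2 * n) =
      (-4) ^ (k * p) * gaussProd (ZMod (p ^ 2)) p (2 * n) (3 * n) := by
  have hc : p ^ 2 = 2 * (3 * n) + 1 := by rw [hn, hpk]; ring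
  have hcard (q : ℕ) (hq : q ≤ 3) : #(coprimeIoc p 0 (q * n)) = q * (k * p) := by
    rw [hn, ← mul_assoc, card_coprimeIoc_mul_succ (by nlinarith), mul_assoc]
  have hD : #(coprimeIoc p (2 * n) (3 * n)) = k * p := by
    have := card_coprimeIoc_add (p := p) (Nat.zero_le (2 * n)) (by omega : 2 * n ≤ 3 * n)
    rw [hcard 2 (by norm_num), hcard 3 (by norm_num)] at this
    omega
  have hB : #(coprimeIoc p 0 n) = k * p := by simpa using hcard 1 (by norm_num)
  have hsplit : gaussProd (ZMod (p ^ 2)) p 0 (2 * n) =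
      (2 ^ (k * p) * gaussProd (ZMod (p ^ 2)) p 0 n) *
        ((-2) ^ (k * p) * gaussProd (ZMod (p ^ 2)) p (2 * n) (3 * n)) := by
    have heven := prod_coprimeIoc_even (ZMod (p ^ 2)) (⟨3 * k, by omega⟩ : Odd p) 0 n
    rw [mul_zero] at heven
    rw [gaussProd, ← prod_filter_mul_prod_filter_not _ (2 ∣ ·), heven,
      prod_coprimeIoc_odd _ (hc ▸ dvd_pow_self p two_ne_zero) (hc ▸ ZMod.natCast_self _)
        (by omega : 2 * n + n = 3 * n), hB, hD]
  refine (isUnit_gaussProd hp two_pos 0 n).mul_left_cancel ?_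
  rw [gaussProd_mul _ (Nat.zero_le n) (by omega : n ≤ 2 * n), hsplit,
    show (-4 : ZMod (p ^ 2)) = 2 * -2 by norm_num, mul_pow]
  ring

theorem gaussProd_mid_pow_pred :
    gaussProd (ZMod (p ^ 2)) p n (2 * n) ^ (p - 1) =
      gaussProd (ZMod (p ^ 2)) p (2 * n) (3 * n) ^ (p - 1) := by
  have h4 : IsUnit (-4 : ZMod (p ^ 2)) := by
    have hp4 : ¬ p ∣ 4 := fun h => by have := Nat.le_of_dvd four_pos h; have := hp.two_le; omega
    simpa using ((ZMod.isUnit_natCast_iff_not_dvd_pow hp two_pos).mpr hp4).neg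
  rw [gaussProd_mid_eq hp hpk hn, mul_pow, ← pow_mul,
    show k * p * (p - 1) = p * (p - 1) * k by ring, pow_mul, pow_mul_pred_eq_one hp h4, one_pow,
    one_mul]

theorem gaussProd_pow_pred_eq_one_iff :
    gaussProd (ZMod (p ^ 2)) p 0 (2 * n) ^ (p - 1) = 1 ↔
      gaussProd (ZMod (p ^ 2)) p 0 n ^ (p - 1) = 1 := by
  have hp2 : p.Coprime 2 := Nat.coprime_two_right.mpr ⟨3 * k, by omega⟩
  have hunit := isUnit_gaussProd hp two_pos
  have hhalf : gaussProd (ZMod (p ^ 2)) p 0 (3 * n) ^ (p - 1) = 1 := by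
    refine pow_pred_eq_one_of_pow_eq_one hp (hunit 0 _) (m := 4) (by simpa using hp2.pow_right 2) ?_
    rw [← pow_mul, pow_mul', gaussProd_half_pow_four hp (c := 3 * n) (by rw [hn, hpk]; ring),
      one_pow]
  rw [← gaussProd_mul _ (Nat.zero_le (2 * n)) (by omega : 2 * n ≤ 3 * n),
    ← gaussProd_mul _ (Nat.zero_le n) (by omega : n ≤ 2 * n), mul_pow, mul_pow,
    ← gaussProd_mid_pow_pred hp hpk hn, mul_assoc, ← sq] at hhalf
  rw [← gaussProd_mul _ (Nat.zero_le n) (by omega : n ≤ 2 * n), mul_pow]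
  exact mul_eq_one_iff_of_mul_sq_eq_one hhalf (pow_pred_eq_one_of_pow_eq_one hp (hunit n _) hp2)

end

theorem prod_filter_Icc_pow_modEq_one_iff (p m e N : ℕ) :
    (∏ i ∈ (Icc 1 m).filter (fun i => ¬ p ∣ i), i) ^ e ≡ 1 [MOD N] ↔
      gaussProd (ZMod N) p 0 m ^ e = 1 := by
  rw [← ZMod.natCast_eq_natCast_iff, Nat.cast_pow, Nat.cast_prod, Nat.cast_one, gaussProd,
    coprimeIoc, ← Icc_add_one_left_eq_Ioc, zero_add]

end GaussFactorial

open GaussFactorial in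
/-- **Cosgrave–Dilcher**: a prime `p ≡ 1 (mod 6)` is 1-exceptional for `m = 3`
if and only if it is 1-exceptional for `m = 6`. -/
theorem one_exceptional_three_iff_six (p : ℕ) (hp : p.Prime) (hmod : p % 6 = 1) :
    (∏ i ∈ (Finset.Icc 1 ((p ^ 2 - 1) / 3)).filter (fun i => ¬ p ∣ i), i) ^ (p - 1)
        ≡ 1 [MOD p ^ 2] ↔
    (∏ i ∈ (Finset.Icc 1 ((p ^ 2 - 1) / 6)).filter (fun i => ¬ p ∣ i), i) ^ (p - 1)
        ≡ 1 [MOD p ^ 2] := by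
  obtain ⟨k, hpk⟩ : ∃ k, p = 6 * k + 1 := ⟨p / 6, by omega⟩
  obtain ⟨n, hn⟩ : ∃ n, n = k * (p + 1) := ⟨_, rfl⟩
  have hp2 : p ^ 2 = 6 * n + 1 := by rw [hn, hpk]; ring
  rw [show (p ^ 2 - 1) / 3 = 2 * n by omega, show (p ^ 2 - 1) / 6 = n by omega,
    prod_filter_Icc_pow_modEq_one_iff, prod_filter_Icc_pow_modEq_one_iff]
  exact gaussProd_pow_pred_eq_one_iff hp hpk hn
end

section
/- Let p be a prime. Then there exists an integer x with p² = 3x² + 3x + 1 if and only if there exists a positive integer q such that 4p = (2+√3)^q + (2−√3)^q (as real numbers, noting that (2+√3)⁻¹ = 2−√3). -/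
/-!
Completing the square, `p² = 3x² + 3x + 1` says exactly that `(2p, 2x + 1)` solves the Pell
equation `X² - 3Y² = 1`, and every solution has `Y` odd. The solutions with `X, Y ≥ 0` are the
`(xₙ, yₙ)` with `xₙ + yₙ√3 = (2 + √3)ⁿ`, so `2xₙ = (2 + √3)ⁿ + (2 - √3)ⁿ`; `n = 0` is excluded
since `x₀ = 1` is odd.
-/

namespace Pell

variable {a : ℕ} (a1 : 1 < a)

-- Mathlib's `Pell.d a1 := a * a - 1` is private, so these restate its facts with `d` unfolded.
theorem xn_succ' (n : ℕ) : xn a1 (n + 1) = xn a1 n * a + (a * a - 1) * yn a1 n :=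
  xn_succ a1 n

theorem pell_eqz' (n : ℕ) :
    (xn a1 n : ℤ) * xn a1 n - (a * a - 1 : ℕ) * yn a1 n * yn a1 n = 1 :=
  pell_eqz a1 n

theorem add_sqrt_pow (n : ℕ) :
    ((a : ℝ) + √(a * a - 1 : ℕ)) ^ n = xn a1 n + yn a1 n * √(a * a - 1 : ℕ) := by
  induction n with
  | zero => simp
  | succ n ih =>
    have hd : √(a * a - 1 : ℕ) * √(a * a - 1 : ℕ) = ((a * a - 1 : ℕ) : ℝ) :=
      Real.mul_self_sqrt (Nat.cast_nonneg _)
    rw [pow_succ, ih, xn_succ', yn_succ]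
    push_cast
    linear_combination (yn a1 n : ℝ) * hd

theorem sub_sqrt_pow (n : ℕ) :
    ((a : ℝ) - √(a * a - 1 : ℕ)) ^ n = xn a1 n - yn a1 n * √(a * a - 1 : ℕ) := by
  induction n with
  | zero => simp
  | succ n ih =>
    have hd : √(a * a - 1 : ℕ) * √(a * a - 1 : ℕ) = ((a * a - 1 : ℕ) : ℝ) :=
      Real.mul_self_sqrt (Nat.cast_nonneg _)
    rw [pow_succ, ih, xn_succ', yn_succ]
    push_cast
    linear_combination (yn a1 n : ℝ) * hd

theorem add_sqrt_pow_add_sub_sqrt_pow (n : ℕ) :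
    ((a : ℝ) + √(a * a - 1 : ℕ)) ^ n + ((a : ℝ) - √(a * a - 1 : ℕ)) ^ n = 2 * xn a1 n := by
  rw [add_sqrt_pow a1, sub_sqrt_pow a1]
  ring

theorem exists_eq_xn_iff (m : ℕ) :
    (∃ y : ℤ, (m : ℤ) ^ 2 - (a * a - 1 : ℕ) * y ^ 2 = 1) ↔ ∃ n, m = xn a1 n := by
  constructor
  · rintro ⟨y, hy⟩
    have hm : m * m - (a * a - 1) * y.natAbs * y.natAbs = 1 := by
      have hy' : (m : ℤ) * m = (a * a - 1 : ℕ) * y.natAbs * y.natAbs + 1 := by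
        rw [mul_assoc, Int.natAbs_mul_self']
        linear_combination hy
      have hy'' : m * m = (a * a - 1) * y.natAbs * y.natAbs + 1 := by exact_mod_cast hy'
      omega
    obtain ⟨n, hxn, -⟩ := eq_pell a1 hm
    exact ⟨n, hxn⟩
  · rintro ⟨n, rfl⟩
    exact ⟨yn a1 n, by linear_combination pell_eqz' a1 n⟩

end Pell

theorem exists_centered_hexagonal_iff (m : ℤ) :
    (∃ x : ℤ, m ^ 2 = 3 * x ^ 2 + 3 * x + 1) ↔ ∃ y : ℤ, (2 * m) ^ 2 - 3 * y ^ 2 = 1 := by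
  constructor
  · rintro ⟨x, hx⟩
    exact ⟨2 * x + 1, by linear_combination 4 * hx⟩
  · rintro ⟨y, hy⟩
    obtain ⟨k, rfl⟩ : Odd y := by
      rcases Int.even_or_odd y with ⟨k, rfl⟩ | hodd
      · exfalso
        have : (2 : ℤ) * (2 * m ^ 2 - 6 * k ^ 2) = 1 := by linear_combination hy
        omega
      · exact hodd
    exact ⟨k, by linarith⟩

theorem pell_form_iff_power_form_general (p : ℕ) :
    (∃ x : ℤ, (p : ℤ) ^ 2 = 3 * x ^ 2 + 3 * x + 1) ↔
    (∃ q : ℕ, 0 < q ∧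
      (4 * p : ℝ) = (2 + Real.sqrt 3) ^ q + (2 - Real.sqrt 3) ^ q) := by
  have hsum (q : ℕ) :
      (2 + Real.sqrt 3) ^ q + (2 - Real.sqrt 3) ^ q = 2 * Pell.xn one_lt_two q := by
    simpa using Pell.add_sqrt_pow_add_sub_sqrt_pow one_lt_two q
  have hxn0 : Pell.xn one_lt_two 0 = 1 := Pell.xn_zero one_lt_two
  rw [exists_centered_hexagonal_iff, ← Nat.cast_two, ← Nat.cast_mul,
    show (3 : ℤ) = (2 * 2 - 1 : ℕ) from rfl, Pell.exists_eq_xn_iff one_lt_two]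
  simp only [hsum]
  constructor
  · rintro ⟨q, hq⟩
    refine ⟨q, Nat.pos_of_ne_zero ?_, ?_⟩
    · rintro rfl
      omega
    · exact_mod_cast (by omega : 4 * p = 2 * Pell.xn one_lt_two q)
  · rintro ⟨q, -, hq⟩
    have : 4 * p = 2 * Pell.xn one_lt_two q := by exact_mod_cast hq
    exact ⟨q, by omega⟩

/-- A prime `p` satisfies `p² = 3x² + 3x + 1` for some integer `x` if and only if
`4p = (2+√3)^q + (2−√3)^q` for some positive integer `q`. -/
theorem pell_form_iff_power_form (p : ℕ) (hp : p.Prime) :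
    (∃ x : ℤ, (p : ℤ) ^ 2 = 3 * x ^ 2 + 3 * x + 1) ↔
    (∃ q : ℕ, 0 < q ∧
      (4 * p : ℝ) = (2 + Real.sqrt 3) ^ q + (2 - Real.sqrt 3) ^ q) :=
  pell_form_iff_power_form_general p
end

section
/- Let m ≥ 2 be an integer and p a prime with p ≡ 1 (mod m). Then (∏_{1 ≤ a ≤ (p²−1)/m, p ∤ a} a)^(p−1) ≡ 1 (mod p²) if and only if, in the field ℤ/pℤ, one has m⁻¹·(w_p − Σ_{a=1}^{(p−1)/m} a⁻¹) − Σ_{a=1}^{(p−1)/m} q_p(a) = 0, where w_p and q_p(a) denote the images in ℤ/pℤ of the Wilson quotient and the Fermat quotients, and a⁻¹ is the inverse of a in ℤ/pℤ. -/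
/-!
Reduced mod `p`, the Fermat quotient `q(a) = (a^(p-1) - 1)/p` turns products of units into sums,
and `q(a + t p) ≡ q(a) - t/a`. Hence `G^(p-1) ≡ 1 (mod p²)` for the Gauss factorial `G` iff
`Σ q(a) ≡ 0` over the `a ≤ (p²-1)/m = k p + k` prime to `p`, where `k = (p-1)/m ≡ -1/m`.
Each of the `k` complete blocks `(t p, t p + p)` contributes `Σ_{i<p} q(i) - t·H_{p-1} ≡ w_p`
(Lerch's formula, and `H_{p-1} ≡ 0`), and the last partial block `Σ_{i ≤ k} (q(i) - k/i)`;
the total is minus the expression in the criterion.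
-/

open Finset Nat

def fermatQuotient (p : ℕ) (a : ℤ) : ℤ := (a ^ (p - 1) - 1) / p

def wilsonQuotient (p : ℕ) : ℤ := (((p - 1)! : ℤ) + 1) / p

theorem fermatQuotient_one (p : ℕ) : fermatQuotient p 1 = 0 := by
  simp [fermatQuotient]

section
variable {p : ℕ} [Fact p.Prime]

theorem natCast_ne_zero_of_pos_of_lt {i : ℕ} (h0 : 0 < i) (hi : i < p) : (i : ZMod p) ≠ 0 := by
  rw [Ne, ZMod.natCast_eq_zero_iff]
  exact Nat.not_dvd_of_pos_of_lt h0 hi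

theorem natCast_mul_fermatQuotient {a : ℤ} (ha : (a : ZMod p) ≠ 0) :
    p * fermatQuotient p a = a ^ (p - 1) - 1 := by
  refine Int.mul_ediv_cancel' ((ZMod.intCast_zmod_eq_zero_iff_dvd _ p).1 ?_)
  push_cast
  rw [ZMod.pow_card_sub_one_eq_one ha, sub_self]

theorem fermatQuotient_mul {a b : ℤ} (ha : (a : ZMod p) ≠ 0) (hb : (b : ZMod p) ≠ 0) :
    (fermatQuotient p (a * b) : ZMod p) = fermatQuotient p a + fermatQuotient p b := by
  have hab : ((a * b : ℤ) : ZMod p) ≠ 0 := by push_cast; exact mul_ne_zero ha hb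
  have key : fermatQuotient p (a * b) =
      fermatQuotient p a + fermatQuotient p b + p * fermatQuotient p a * fermatQuotient p b := by
    refine mul_left_cancel₀ (Int.natCast_ne_zero.2 (Fact.out : p.Prime).ne_zero) ?_
    linear_combination natCast_mul_fermatQuotient hab - (p * fermatQuotient p b + 1) *
      natCast_mul_fermatQuotient ha - a ^ (p - 1) * natCast_mul_fermatQuotient hb
  rw [key]
  push_cast
  rw [ZMod.natCast_self]
  ring

theorem fermatQuotient_prod {ι : Type*} (s : Finset ι) (f : ι → ℤ)
    (hf : ∀ i ∈ s, (f i : ZMod p) ≠ 0) :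
    (fermatQuotient p (∏ i ∈ s, f i) : ZMod p) =
      ∑ i ∈ s, (fermatQuotient p (f i) : ZMod p) := by
  classical
  induction s using Finset.induction_on with
  | empty => simp [fermatQuotient_one]
  | insert j s hj ih =>
    rw [prod_insert hj, sum_insert hj, fermatQuotient_mul (hf j (mem_insert_self j s)),
      ih fun i hi => hf i (mem_insert_of_mem hi)]
    push_cast
    exact prod_ne_zero_iff.2 fun i hi => hf i (mem_insert_of_mem hi)

theorem fermatQuotient_add_mul {a : ℤ} (ha : (a : ZMod p) ≠ 0) (t : ℤ) :
    (fermatQuotient p (a + t * p) : ZMod p) = fermatQuotient p a - t * (a : ZMod p)⁻¹ := by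
  have hat : ((a + t * p : ℤ) : ZMod p) ≠ 0 := by simpa using ha
  obtain ⟨c, hc⟩ := (pow_dvd_pow_of_dvd (dvd_mul_left (p : ℤ) t) 2).trans
    (sq_dvd_add_pow_sub_sub (t * p : ℤ) a (p - 1))
  have key : fermatQuotient p (a + t * p) =
      fermatQuotient p a + a ^ (p - 2) * t * (p - 1 : ℕ) + p * c := by
    refine mul_left_cancel₀ (Int.natCast_ne_zero.2 (Fact.out : p.Prime).ne_zero) ?_
    have h2 : p - 1 - 1 = p - 2 := by omega
    rw [h2] at hc
    linear_combination natCast_mul_fermatQuotient hat - natCast_mul_fermatQuotient ha + hc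
  have hinv : (a : ZMod p) ^ (p - 2) = (a : ZMod p)⁻¹ := by
    refine eq_inv_of_mul_eq_one_left ?_
    rw [← pow_succ, show p - 2 + 1 = p - 1 by have := (Fact.out : p.Prime).two_le; omega,
      ZMod.pow_card_sub_one_eq_one ha]
  rw [key]
  push_cast
  rw [hinv, Nat.cast_sub (Fact.out : p.Prime).one_le, ZMod.natCast_self]
  ring

theorem fermatQuotient_neg_one (hp : p ≠ 2) : fermatQuotient p (-1) = 0 := by
  have : Even (p - 1) := (Fact.out : p.Prime).even_sub_one hp
  simp [fermatQuotient, this.neg_one_pow]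

theorem pow_sub_one_modEq_one_iff {a : ℤ} (ha : (a : ZMod p) ≠ 0) :
    a ^ (p - 1) ≡ 1 [ZMOD p ^ 2] ↔ (fermatQuotient p a : ZMod p) = 0 := by
  rw [Int.modEq_comm, Int.modEq_iff_dvd, ← natCast_mul_fermatQuotient ha, sq,
    mul_dvd_mul_iff_left (Int.natCast_ne_zero.2 (Fact.out : p.Prime).ne_zero),
    ZMod.intCast_zmod_eq_zero_iff_dvd]

theorem prod_pow_sub_one_modEq_one_iff {ι : Type*} (s : Finset ι) (f : ι → ℤ)
    (hf : ∀ i ∈ s, (f i : ZMod p) ≠ 0) :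
    (∏ i ∈ s, f i) ^ (p - 1) ≡ 1 [ZMOD p ^ 2] ↔
      ∑ i ∈ s, (fermatQuotient p (f i) : ZMod p) = 0 := by
  rw [pow_sub_one_modEq_one_iff (by push_cast; exact prod_ne_zero_iff.2 hf),
    fermatQuotient_prod s f hf]

theorem sum_Icc_natCast_eq_sum_units {M : Type*} [AddCommMonoid M] (f : ZMod p → M) :
    ∑ i ∈ Icc 1 (p - 1), f i = ∑ u : (ZMod p)ˣ, f u := by
  have hp := (Fact.out : p.Prime).one_lt
  refine sum_bij' (fun i hi => Units.mk0 (i : ZMod p) ?_) (fun u _ => (u : ZMod p).val)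
    (fun _ _ => mem_univ _) (fun u _ => ?_) (fun i hi => ?_)
    (fun u _ => Units.ext (ZMod.natCast_zmod_val _)) (fun _ _ => rfl)
  · rw [mem_Icc] at hi
    exact natCast_ne_zero_of_pos_of_lt (by omega) (by omega)
  · have := ZMod.val_lt (u : ZMod p)
    have := (ZMod.val_ne_zero (u : ZMod p)).2 u.ne_zero
    rw [mem_Icc]; omega
  · rw [mem_Icc] at hi
    simp [ZMod.val_cast_of_lt (show i < p by omega)]

theorem sum_inv_Icc_eq_zero (hp : p ≠ 2) : ∑ i ∈ Icc 1 (p - 1), (i : ZMod p)⁻¹ = 0 := by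
  classical
  have hdvd : ¬ p - 1 ∣ 1 := by
    have := (Fact.out : p.Prime).two_le
    exact fun h => absurd (Nat.le_of_dvd one_pos h) (by omega)
  rw [sum_Icc_natCast_eq_sum_units (fun x => x⁻¹)]
  simp only [← Units.val_inv_eq_inv_val]
  refine (Equiv.sum_comp (Equiv.inv (ZMod p)ˣ) (fun u => (u : ZMod p))).trans ?_
  simpa [ZMod.card, hdvd] using FiniteField.sum_pow_units (ZMod p) 1

theorem natCast_factorial_eq_wilsonQuotient :
    (((p - 1)! : ℕ) : ℤ) = -1 + wilsonQuotient p * p := by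
  have hdvd : (p : ℤ) ∣ (p - 1)! + 1 := by
    rw [← ZMod.intCast_zmod_eq_zero_iff_dvd]
    push_cast
    rw [ZMod.wilsons_lemma, neg_add_cancel]
  rw [wilsonQuotient, Int.ediv_mul_cancel hdvd]
  ring

theorem sum_fermatQuotient_Icc_eq_wilsonQuotient (hp : p ≠ 2) :
    ∑ i ∈ Icc 1 (p - 1), (fermatQuotient p i : ZMod p) = wilsonQuotient p := by
  have hi : ∀ i ∈ Icc 1 (p - 1), ((i : ℤ) : ZMod p) ≠ 0 := by
    intro i hi
    rw [mem_Icc] at hi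
    rw [Int.cast_natCast]
    exact natCast_ne_zero_of_pos_of_lt (by omega) (by omega)
  have hfac : ∏ i ∈ Icc 1 (p - 1), (i : ℤ) = (((p - 1)! : ℕ) : ℤ) := by
    rw [← Nat.cast_prod, ← Finset.Ico_add_one_right_eq_Icc, Finset.prod_Ico_id_eq_factorial]
  rw [← fermatQuotient_prod _ _ hi, hfac, natCast_factorial_eq_wilsonQuotient,
    fermatQuotient_add_mul (by simp), fermatQuotient_neg_one hp]
  simp

theorem sum_fermatQuotient_filter_Icc_mul_add (q : ℕ) {r : ℕ} (hr : r < p) :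
    ∑ a ∈ (Icc 1 (q * p + r)).filter (fun a => ¬ p ∣ a), (fermatQuotient p a : ZMod p) =
      ∑ a ∈ (Icc 1 (q * p)).filter (fun a => ¬ p ∣ a), (fermatQuotient p a : ZMod p) +
        ∑ i ∈ Icc 1 r, ((fermatQuotient p i : ZMod p) - q * (i : ZMod p)⁻¹) := by
  induction r with
  | zero => simp
  | succ r ih =>
    have hndvd : ¬ p ∣ q * p + r + 1 :=
      (Nat.dvd_add_right (dvd_mul_left p q)).not.2 (Nat.not_dvd_of_pos_of_lt r.succ_pos hr)
    have hunit : (((r + 1 : ℕ) : ℤ) : ZMod p) ≠ 0 := by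
      rw [Int.cast_natCast]
      exact natCast_ne_zero_of_pos_of_lt r.succ_pos hr
    rw [sum_filter, ← add_assoc, sum_Icc_succ_top (by omega), ← sum_filter, if_pos hndvd,
      ih (by omega), sum_Icc_succ_top (by omega), add_assoc,
      show ((q * p + r + 1 : ℕ) : ℤ) = ((r + 1 : ℕ) : ℤ) + q * p by push_cast; ring,
      fermatQuotient_add_mul hunit]
    push_cast
    ring

theorem sum_fermatQuotient_filter_Icc_mul (hp : p ≠ 2) (q : ℕ) :
    ∑ a ∈ (Icc 1 (q * p)).filter (fun a => ¬ p ∣ a), (fermatQuotient p a : ZMod p) =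
      q * wilsonQuotient p := by
  have hp1 := (Fact.out : p.Prime).one_le
  induction q with
  | zero => simp
  | succ q ih =>
    rw [show (q + 1) * p = q * p + (p - 1) + 1 by rw [Nat.add_assoc, Nat.sub_add_cancel hp1]; ring,
      sum_filter, sum_Icc_succ_top (by omega), ← sum_filter,
      if_neg (by rw [not_not, Nat.add_assoc, Nat.sub_add_cancel hp1]; exact ⟨q + 1, by ring⟩),
      add_zero, sum_fermatQuotient_filter_Icc_mul_add q (by omega), ih, sum_sub_distrib,
      sum_fermatQuotient_Icc_eq_wilsonQuotient hp, ← mul_sum, sum_inv_Icc_eq_zero hp]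
    push_cast
    ring

end

theorem gauss_factorial_criterion_general (m p : ℕ) (hp : p.Prime)
    (hmod : p % m = 1) :
    (∏ a ∈ (Finset.Icc 1 ((p ^ 2 - 1) / m)).filter (fun a => ¬ p ∣ a), a) ^ (p - 1)
        ≡ 1 [MOD p ^ 2] ↔
    (m : ZMod p)⁻¹ *
        (((((Nat.factorial (p - 1) : ℤ) + 1) / (p : ℤ) : ℤ) : ZMod p)
          - ∑ a ∈ Finset.Icc 1 ((p - 1) / m), ((a : ZMod p))⁻¹)
      - ∑ a ∈ Finset.Icc 1 ((p - 1) / m), (((((a : ℤ) ^ (p - 1) - 1) / (p : ℤ) : ℤ) : ZMod p))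
      = 0 := by
  have := Fact.mk hp
  obtain ⟨k, hk⟩ : m ∣ p - 1 := hmod ▸ Nat.dvd_sub_mod p
  have hpk : p = m * k + 1 := by have := hp.one_le; omega
  have hm : 0 < m := Nat.pos_of_ne_zero fun h => hp.ne_one (by simpa [h] using hpk)
  have hp2 : p ≠ 2 := by
    rintro rfl
    simp [Nat.eq_one_of_mul_eq_one_right (by omega : m * k = 1)] at hmod
  have hkp : k < p := by have := Nat.le_mul_of_pos_left k hm; omega
  have hN : (p ^ 2 - 1) / m = k * p + k :=
    Nat.div_eq_of_eq_mul_left hm (by rw [hpk, Nat.sub_eq_of_eq_add]; ring)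
  have hk' : (p - 1) / m = k := Nat.div_eq_of_eq_mul_right hm (by rw [hk, mul_comm])
  have hkm : (k : ZMod p) = -(m : ZMod p)⁻¹ := by
    have hmk : ((m * k + 1 : ℕ) : ZMod p) = 0 := hpk ▸ ZMod.natCast_self p
    push_cast at hmk
    rw [inv_eq_of_mul_eq_one_right (by linear_combination -hmk : (m : ZMod p) * -k = 1), neg_neg]
  rw [hN, hk', ← Int.natCast_modEq_iff]
  simp only [Nat.cast_pow, Nat.cast_prod, Nat.cast_one]
  rw [prod_pow_sub_one_modEq_one_iff _ _ (fun a ha => ?_),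
    sum_fermatQuotient_filter_Icc_mul_add _ hkp, sum_fermatQuotient_filter_Icc_mul hp2]
  · change _ ↔ (m : ZMod p)⁻¹ * ((wilsonQuotient p : ZMod p) - _) -
      ∑ a ∈ Icc 1 k, (fermatQuotient p a : ZMod p) = 0
    rw [sum_sub_distrib, ← mul_sum, hkm]
    constructor <;> intro h <;> linear_combination -h
  · rw [mem_filter] at ha
    rw [Int.cast_natCast, Ne, ZMod.natCast_eq_zero_iff]
    exact ha.2

/-- For `m ≥ 2` and a prime `p ≡ 1 (mod m)`, the Gauss factorial
`((p²−1)/m)_p!` raised to the power `p − 1` is `1` modulo `p²` if and only if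
`(1/m)·(w_p − H_{(p−1)/m}) − Σ_{a=1}^{(p−1)/m} q_p(a) = 0` in `ℤ/pℤ`,
where `w_p = ((p−1)! + 1)/p` is the Wilson quotient and
`q_p(a) = (a^(p−1) − 1)/p` are the Fermat quotients. -/
theorem gauss_factorial_criterion (m p : ℕ) (hm : 2 ≤ m) (hp : p.Prime)
    (hmod : p % m = 1) :
    (∏ a ∈ (Finset.Icc 1 ((p ^ 2 - 1) / m)).filter (fun a => ¬ p ∣ a), a) ^ (p - 1)
        ≡ 1 [MOD p ^ 2] ↔
    (m : ZMod p)⁻¹ *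
        (((((Nat.factorial (p - 1) : ℤ) + 1) / (p : ℤ) : ℤ) : ZMod p)
          - ∑ a ∈ Finset.Icc 1 ((p - 1) / m), ((a : ZMod p))⁻¹)
      - ∑ a ∈ Finset.Icc 1 ((p - 1) / m), (((((a : ℤ) ^ (p - 1) - 1) / (p : ℤ) : ℤ) : ZMod p))
      = 0 :=
  gauss_factorial_criterion_general m p hp hmod
end

section
/- Let p be a prime with p ≡ 1 (mod 4), and let E : ℕ → ℤ be the sequence of Euler numbers. Then p divides E_{p−1}. -/
/-! With `ε m = (-1) ^ (m / 2)` (the sign pattern `+ + - -`), the numbers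
`F n = ∑_{m < p} ε m * m ^ n` in `ZMod p` satisfy the Euler recurrence: by the binomial
theorem `2 ∑_k C(2n, 2k) F (2k) = ∑_{m < p} ε m ((m + 1) ^ 2n + (m - 1) ^ 2n)`, which
telescopes because `ε (m + 2) = - ε m`, and the surviving boundary terms cancel modulo `p`
when `p ≡ 1 (mod 4)`. Since also `F 0 = 1`, the recurrence forces `E (2k) ≡ F (2k)`, and by
Fermat's little theorem `F (p - 1) = ∑_{0 < m < p} ε m = F 0 - 1 = 0`. -/

open Finset

section EulerRecurrence

variable {R S : Type*} [CommRing R] [CommRing S]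

def EulerRecurrence (E : ℕ → R) : Prop :=
  ∀ n, 1 ≤ n → ∑ k ∈ range (n + 1), ((2 * n).choose (2 * k) : R) * E (2 * k) = 0

theorem EulerRecurrence.map {E : ℕ → R} (hE : EulerRecurrence E) (f : R →+* S) :
    EulerRecurrence (f ∘ E) := fun n hn => by
  simpa using congrArg f (hE n hn)

theorem EulerRecurrence.apply_two_mul_eq_of_apply_zero_eq {E F : ℕ → R}
    (hE : EulerRecurrence E) (hF : EulerRecurrence F) (h0 : E 0 = F 0) (k : ℕ) :
    E (2 * k) = F (2 * k) := by
  induction k using Nat.strong_induction_on with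
  | _ k ih =>
    rcases Nat.eq_zero_or_pos k with rfl | hk
    · exact h0
    have hEk := hE k hk
    have hFk := hF k hk
    rw [sum_range_succ, Nat.choose_self, Nat.cast_one, one_mul] at hEk hFk
    rw [sum_congr rfl fun j hj => by rw [ih j (mem_range.1 hj)]] at hEk
    linear_combination hEk - hFk

end EulerRecurrence

theorem sum_range_two_mul_add_one_of_odd_eq_zero {M : Type*} [AddCommMonoid M] {g : ℕ → M}
    (hg : ∀ j, Odd j → g j = 0) (n : ℕ) :
    ∑ j ∈ range (2 * n + 1), g j = ∑ k ∈ range (n + 1), g (2 * k) := by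
  induction n with
  | zero => simp
  | succ n ih =>
    rw [show 2 * (n + 1) + 1 = 2 * n + 1 + 1 + 1 by ring, sum_range_succ, sum_range_succ, ih,
      hg _ (odd_two_mul_add_one n), add_zero, sum_range_succ _ (n + 1)]
    rfl

theorem add_one_pow_two_mul_add_sub_one_pow_two_mul {R : Type*} [CommRing R] (x : R) (n : ℕ) :
    (x + 1) ^ (2 * n) + (x - 1) ^ (2 * n) =
      2 * ∑ k ∈ range (n + 1), ((2 * n).choose (2 * k) : R) * x ^ (2 * k) := by
  have hsym : (x - 1) ^ (2 * n) = (-x + 1) ^ (2 * n) := by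
    rw [← (even_two_mul n).neg_pow]
    ring_nf
  rw [hsym, add_pow, add_pow, ← sum_add_distrib, mul_sum]
  rw [sum_range_two_mul_add_one_of_odd_eq_zero (fun j hj => by
    simp only [one_pow, mul_one, hj.neg_pow, ← add_mul, add_neg_cancel, zero_mul])]
  refine sum_congr rfl fun k _ => ?_
  simp only [one_pow, mul_one, (even_two_mul k).neg_pow]
  ring

theorem sum_range_neg_one_pow_div_two (R : Type*) [Ring R] (s : ℕ) :
    ∑ m ∈ range (2 * s + 1), (-1 : R) ^ (m / 2) = 1 := by
  induction s with
  | zero => simp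
  | succ s ih =>
    rw [show 2 * (s + 1) + 1 = 2 * s + 1 + 1 + 1 by ring, sum_range_succ, sum_range_succ, ih,
      show (2 * s + 1) / 2 = s by omega, show (2 * s + 1 + 1) / 2 = s + 1 by omega, pow_succ,
      mul_neg_one, add_neg_cancel_right]

theorem sum_range_neg_one_pow_div_two_mul_add_shift {R : Type*} [Ring R] (f : R → R) (N : ℕ) :
    ∑ m ∈ range (N + 2), (-1 : R) ^ (m / 2) * (f (m + 1) + f (m - 1)) =
      (-1) ^ ((N + 1) / 2) * f (N + 2) + (-1) ^ (N / 2) * f (N + 1) + f (-1) + f 0 := by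
  induction N with
  | zero =>
    simp only [sum_range_succ, sum_range_zero]
    norm_num
    abel
  | succ N ih =>
    rw [sum_range_succ, ih, show (N + 2) / 2 = N / 2 + 1 by omega, pow_succ]
    push_cast
    rw [show (N : R) + 2 + 1 = N + 1 + 2 by rw [add_assoc, add_assoc]; norm_num,
      show (N : R) + 2 - 1 = N + 1 by rw [add_sub_assoc]; norm_num,
      add_assoc (N : R) 1 1, one_add_one_eq_two]
    noncomm_ring

def eulerModel (p n : ℕ) : ZMod p :=
  ∑ m ∈ range p, (-1) ^ (m / 2) * (m : ZMod p) ^ n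

theorem eulerModel_zero {p : ℕ} (hp : Odd p) : eulerModel p 0 = 1 := by
  obtain ⟨s, rfl⟩ := hp
  simpa [eulerModel] using sum_range_neg_one_pow_div_two (ZMod (2 * s + 1)) s

theorem eulerRecurrence_eulerModel {p : ℕ} [Fact p.Prime] (hp4 : p % 4 = 1) :
    EulerRecurrence (eulerModel p) := by
  intro n hn
  have h2 : (2 : ZMod p) ≠ 0 := Ring.two_ne_zero (by rw [ZMod.ringChar_zmod_n]; omega)
  refine (mul_eq_zero.1 ?_).resolve_left h2
  obtain ⟨N, rfl⟩ : ∃ N, p = N + 2 :=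
    ⟨p - 2, by have := (Fact.out : p.Prime).two_le; omega⟩
  have hN2 : ((N : ℕ) : ZMod (N + 2)) + 2 = 0 := by exact_mod_cast ZMod.natCast_self (N + 2)
  have hN1 : ((N : ℕ) : ZMod (N + 2)) + 1 = -1 := by linear_combination hN2
  calc 2 * ∑ k ∈ range (n + 1), ((2 * n).choose (2 * k) : ZMod (N + 2)) * eulerModel _ (2 * k)
      = ∑ m ∈ range (N + 2), (-1) ^ (m / 2) * (((m : ZMod (N + 2)) + 1) ^ (2 * n) +
          ((m : ZMod (N + 2)) - 1) ^ (2 * n)) := by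
        simp only [add_one_pow_two_mul_add_sub_one_pow_two_mul, eulerModel, mul_sum]
        rw [sum_comm]
        exact sum_congr rfl fun _ _ => sum_congr rfl fun _ _ => by ring
    _ = (-1) ^ ((N + 1) / 2) * (N + 2 : ZMod (N + 2)) ^ (2 * n) +
          (-1) ^ (N / 2) * (N + 1 : ZMod (N + 2)) ^ (2 * n) + (-1) ^ (2 * n) + 0 ^ (2 * n) :=
        sum_range_neg_one_pow_div_two_mul_add_shift (· ^ (2 * n)) N
    _ = 0 := by
        rw [hN2, hN1, Even.neg_one_pow ⟨(N + 1) / 4, by omega⟩,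
          Odd.neg_one_pow ⟨N / 4, by omega⟩, (even_two_mul n).neg_one_pow, zero_pow (by omega)]
        ring

theorem eulerModel_sub_one {p : ℕ} [Fact p.Prime] (hp : Odd p) : eulerModel p (p - 1) = 0 := by
  have hshift : eulerModel p (p - 1) + 1 = eulerModel p 0 := by
    obtain ⟨s, rfl⟩ := hp
    rw [eulerModel, eulerModel, sum_range_succ', sum_range_succ']
    have hfermat :
        ∀ m ∈ range (2 * s), ((m + 1 : ℕ) : ZMod (2 * s + 1)) ^ (2 * s + 1 - 1) = 1 :=
      fun m hm => ZMod.pow_card_sub_one_eq_one <| by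
        rw [Ne, ZMod.natCast_eq_zero_iff]
        exact Nat.not_dvd_of_pos_of_lt m.succ_pos (by simp at hm; omega)
    rw [sum_congr rfl fun m hm => by rw [hfermat m hm]]
    have hs : s ≠ 0 := by have := (Fact.out : (2 * s + 1).Prime).two_le; omega
    simp [hs]
  simpa [eulerModel_zero hp] using hshift

theorem prime_dvd_euler_number_general (p : ℕ) (hp : p.Prime) (hmod : p % 4 = 1)
    (E : ℕ → ℤ) (hE0 : E 0 = 1)
    (hErec : ∀ n, 1 ≤ n →
      ∑ k ∈ Finset.range (n + 1), ((2 * n).choose (2 * k) : ℤ) * E (2 * k) = 0) :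
    (p : ℤ) ∣ E (p - 1) := by
  have := Fact.mk hp
  have hodd : Odd p := Nat.odd_iff.2 (by omega)
  have hE : EulerRecurrence (Int.castRingHom (ZMod p) ∘ E) := EulerRecurrence.map hErec _
  have hagree := hE.apply_two_mul_eq_of_apply_zero_eq (eulerRecurrence_eulerModel hmod)
    (by simp [hE0, eulerModel_zero hodd]) ((p - 1) / 2)
  rw [show 2 * ((p - 1) / 2) = p - 1 by omega, eulerModel_sub_one hodd] at hagree
  exact (ZMod.intCast_zmod_eq_zero_iff_dvd _ _).1 hagree

/-- For a prime `p ≡ 1 (mod 4)`, `p` divides the Euler number `E_{p−1}`, where the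
Euler numbers are characterized by `E₀ = 1`, `E_n = 0` for odd `n`, and
`Σ_{k=0}^{n} C(2n,2k)·E_{2k} = 0` for `n ≥ 1`. -/
theorem prime_dvd_euler_number (p : ℕ) (hp : p.Prime) (hmod : p % 4 = 1)
    (E : ℕ → ℤ) (hE0 : E 0 = 1) (hEodd : ∀ n, Odd n → E n = 0)
    (hErec : ∀ n, 1 ≤ n →
      ∑ k ∈ Finset.range (n + 1), ((2 * n).choose (2 * k) : ℤ) * E (2 * k) = 0) :
    (p : ℤ) ∣ E (p - 1) :=
  prime_dvd_euler_number_general p hp hmod E hE0 hErec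
end

section
/- Let p be a prime with p ≡ 1 (mod 3), and let G : ℕ → ℚ be the sequence of Glaisher numbers. Then the rational number G_{p−1} is congruent to 0 modulo p, i.e. G_{p−1} = p·(a/b) for some integers a, b with p ∤ b. -/
/-!
The Glaisher numbers are `p`-integral, since their recurrence only divides by `2` and `3`, so they
can be reduced modulo `p`; in `ZMod p` the recurrence still determines the sequence. It is also
satisfied by the weighted power sums `S n = ∑ x, w x * x ^ n`, where `w` repeats the pattern
`1/2, 1/2, -1` along the representatives `0, …, p - 1`: shifting `x ↦ x ± 1` turns the recurrence
into the three-term sums `w (y - 1) + w y + w (y + 1)`, which vanish for `y ≠ 0` because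
`p ≡ 1 (mod 3)` makes the pattern consistent across the wrap-around from `p - 1` to `0`.
By Fermat's little theorem, `S (p - 1) = ∑ w - w 0 = 1/2 - 1/2 = 0`.
-/

open Finset

section Glaisher

variable {R S : Type*} [CommRing R] [CommRing S]

structure IsGlaisher (g : ℕ → R) : Prop where
  two_mul_zero : 2 * g 0 = 1
  recurrence : ∀ n, 1 ≤ n →
    3 * g n + 2 * ∑ k ∈ (range n).filter (fun k => Even (n - k)), (n.choose k : R) * g k = 0

namespace IsGlaisher

variable {g h : ℕ → R}

theorem map (hg : IsGlaisher g) (f : R →+* S) : IsGlaisher (f ∘ g) where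
  two_mul_zero := by simpa [map_ofNat] using congrArg f hg.two_mul_zero
  recurrence n hn := by simpa [map_ofNat] using congrArg f (hg.recurrence n hn)

theorem of_map {f : R →+* S} (hf : Function.Injective f) (hg : IsGlaisher (f ∘ g)) :
    IsGlaisher g where
  two_mul_zero := hf (by simpa [map_ofNat] using hg.two_mul_zero)
  recurrence n hn := hf (by simpa [map_ofNat] using hg.recurrence n hn)

theorem unique (hg : IsGlaisher g) (hh : IsGlaisher h) (h3 : IsLeftRegular (3 : R)) :
    g = h := by
  funext n
  induction n using Nat.strong_induction_on with
  | _ n ih =>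
    rcases Nat.eq_zero_or_pos n with rfl | hn
    · linear_combination h 0 * hg.two_mul_zero - g 0 * hh.two_mul_zero
    · have hsum : ∑ k ∈ (range n).filter (fun k => Even (n - k)), (n.choose k : R) * g k =
          ∑ k ∈ (range n).filter (fun k => Even (n - k)), (n.choose k : R) * h k :=
        sum_congr rfl fun k hk => by rw [ih k (mem_range.1 (mem_filter.1 hk).1)]
      apply h3
      linear_combination hg.recurrence n hn - hh.recurrence n hn - 2 * hsum

theorem mem_subring (hg : IsGlaisher g) {T : Subring R} (h2 : IsUnit (2 : T))
    (h3 : IsUnit (3 : T)) (n : ℕ) : g n ∈ T := by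
  obtain ⟨s, hs⟩ := h2.exists_right_inv
  obtain ⟨t, ht⟩ := h3.exists_right_inv
  replace hs : 2 * (s : R) = 1 := by
    simpa only [map_mul, map_ofNat, map_one, Subring.coe_subtype] using congrArg T.subtype hs
  replace ht : 3 * (t : R) = 1 := by
    simpa only [map_mul, map_ofNat, map_one, Subring.coe_subtype] using congrArg T.subtype ht
  induction n using Nat.strong_induction_on with
  | _ n ih =>
    rcases Nat.eq_zero_or_pos n with rfl | hn
    · have : g 0 = s := by linear_combination s * hg.two_mul_zero - g 0 * hs
      exact this ▸ s.2
    · have : g n = -(2 * t) * ∑ k ∈ (range n).filter (fun k => Even (n - k)),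
          (n.choose k : R) * g k := by
        linear_combination t * hg.recurrence n hn - g n * ht
      rw [this]
      refine T.mul_mem (T.neg_mem (T.mul_mem (ofNat_mem T 2) t.2)) (T.sum_mem fun k hk => ?_)
      exact T.mul_mem (natCast_mem T _) (ih k (mem_range.1 (mem_filter.1 hk).1))

end IsGlaisher

theorem add_one_pow_add_sub_one_pow (x : R) (n : ℕ) :
    (x + 1) ^ n + (x - 1) ^ n =
      2 * ∑ k ∈ (range n).filter (fun k => Even (n - k)), (n.choose k : R) * x ^ k + 2 * x ^ n := by
  have hterm : ∀ k ∈ range (n + 1),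
      x ^ k * 1 ^ (n - k) * n.choose k + x ^ k * (-1) ^ (n - k) * n.choose k =
        if Even (n - k) then 2 * ((n.choose k : R) * x ^ k) else 0 := by
    intro k _
    split_ifs with h
    · rw [h.neg_one_pow]; ring
    · rw [(Nat.not_even_iff_odd.mp h).neg_one_pow]; ring
  rw [sub_eq_add_neg, add_pow, add_pow, ← sum_add_distrib, sum_congr rfl hterm, sum_range_succ,
    ← sum_filter, mul_sum, Nat.sub_self, if_pos Even.zero, Nat.choose_self, Nat.cast_one, one_mul]

theorem isGlaisher_sum_mul_pow [Fintype R] {w : R → R} (hsum : 2 * ∑ x, w x = 1)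
    (hw : ∀ y ≠ 0, w (y - 1) + w y + w (y + 1) = 0) :
    IsGlaisher fun n => ∑ x, w x * x ^ n where
  two_mul_zero := by simpa using hsum
  recurrence n hn := by
    have hshift (a : R) : ∑ x, w x * (x + a) ^ n = ∑ y, w (y - a) * y ^ n :=
      Fintype.sum_equiv (Equiv.addRight a) _ _ fun x => by simp
    have hswap : ∑ x, w x * ∑ k ∈ (range n).filter (fun k => Even (n - k)),
        (n.choose k : R) * x ^ k = ∑ k ∈ (range n).filter (fun k => Even (n - k)),
          (n.choose k : R) * ∑ x, w x * x ^ k := by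
      simp only [mul_sum]
      rw [sum_comm]
      exact sum_congr rfl fun k _ => sum_congr rfl fun x _ => by ring
    calc 3 * ∑ x, w x * x ^ n + 2 * ∑ k ∈ (range n).filter (fun k => Even (n - k)),
          (n.choose k : R) * ∑ x, w x * x ^ k
        = ∑ x, w x * (x ^ n + (x + 1) ^ n + (x + -1) ^ n) := by
          rw [← hswap, mul_sum, mul_sum, ← sum_add_distrib]
          refine sum_congr rfl fun x _ => ?_
          rw [← sub_eq_add_neg, add_assoc, add_one_pow_add_sub_one_pow]
          ring
      _ = ∑ y, (w (y - 1) + w y + w (y + 1)) * y ^ n := by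
          simp only [mul_add, add_mul, sum_add_distrib, hshift, sub_neg_eq_add]
          ring
      _ = 0 := sum_eq_zero fun y _ => by
          rcases eq_or_ne y 0 with rfl | hy
          · simp [zero_pow (Nat.one_le_iff_ne_zero.mp hn)]
          · simp [hw y hy]

end Glaisher

section GlaisherWeight

variable {p : ℕ} [Fact p.Prime]

def glaisherWeight (p : ℕ) (x : ZMod p) : ZMod p :=
  if x.val % 3 = 2 then -1 else 2⁻¹

theorem two_inv_add_two_inv_of_mod_three_eq_one (hp : p % 3 = 1) :
    (2⁻¹ + 2⁻¹ : ZMod p) = 1 := by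
  have h2 : ((2 : ℕ) : ZMod p) ≠ 0 := by
    rw [Ne, ZMod.natCast_eq_zero_iff]
    intro hdvd
    have := Nat.le_of_dvd two_pos hdvd
    have := (Fact.out : p.Prime).two_le
    omega
  rw [← two_mul, mul_inv_cancel₀ (by exact_mod_cast h2)]

theorem glaisherWeight_window_eq_zero (hp : p % 3 = 1) {y : ZMod p} (hy : y ≠ 0) :
    glaisherWeight p (y - 1) + glaisherWeight p y + glaisherWeight p (y + 1) = 0 := by
  have hhalf := two_inv_add_two_inv_of_mod_three_eq_one hp
  have hy1 : 1 ≤ y.val := Nat.one_le_iff_ne_zero.mpr ((ZMod.val_ne_zero y).mpr hy)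
  have hval1 : (1 : ZMod p).val = 1 := ZMod.val_one p
  have hsub : (y - 1).val = y.val - 1 := by rw [ZMod.val_sub (hval1 ▸ hy1), hval1]
  have hadd : (y + 1).val = if y.val + 1 < p then y.val + 1 else 0 := by
    rw [ZMod.val_add, hval1]
    split_ifs with h
    · exact Nat.mod_eq_of_lt h
    · rw [show y.val + 1 = p by have := y.val_lt; omega, Nat.mod_self]
  unfold glaisherWeight
  rw [hsub, hadd]
  have := y.val_lt
  split_ifs <;> first | omega | contradiction | linear_combination hhalf

theorem sum_range_three_mul_add_one_ite_mod_three (hp : p % 3 = 1) (m : ℕ) :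
    ∑ a ∈ range (3 * m + 1), (if a % 3 = 2 then -1 else 2⁻¹ : ZMod p) = 2⁻¹ := by
  induction m with
  | zero => simp
  | succ m ih =>
    rw [show 3 * (m + 1) + 1 = 3 * m + 1 + 1 + 1 + 1 by ring, sum_range_succ, sum_range_succ,
      sum_range_succ, ih, if_neg (by omega), if_pos (by omega), if_neg (by omega)]
    linear_combination two_inv_add_two_inv_of_mod_three_eq_one hp

theorem sum_glaisherWeight (hp : p % 3 = 1) : ∑ x, glaisherWeight p x = 2⁻¹ := by
  obtain ⟨m, hm⟩ : ∃ m, p = 3 * m + 1 := ⟨p / 3, by omega⟩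
  rw [← sum_range_three_mul_add_one_ite_mod_three hp m, ← hm]
  exact sum_nbij' ZMod.val Nat.cast (fun x _ => mem_range.2 x.val_lt) (fun _ _ => mem_univ _)
    (fun x _ => ZMod.natCast_zmod_val x) (fun a ha => ZMod.val_cast_of_lt (mem_range.1 ha))
    (fun _ _ => rfl)

theorem sum_glaisherWeight_mul_pow_sub_one (hp : p % 3 = 1) :
    ∑ x, glaisherWeight p x * x ^ (p - 1) = 0 := by
  have hp1 : p - 1 ≠ 0 := by have := (Fact.out : p.Prime).two_le; omega
  have hunits : ∑ x ∈ univ.erase 0, glaisherWeight p x * x ^ (p - 1) =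
      ∑ x ∈ univ.erase 0, glaisherWeight p x :=
    sum_congr rfl fun x hx => by rw [ZMod.pow_card_sub_one_eq_one (ne_of_mem_erase hx), mul_one]
  rw [← add_sum_erase _ _ (mem_univ 0), zero_pow hp1, mul_zero, zero_add, hunits,
    sum_erase_eq_sub (mem_univ 0), sum_glaisherWeight hp]
  simp [glaisherWeight]

theorem isGlaisher_sum_glaisherWeight_mul_pow (hp : p % 3 = 1) :
    IsGlaisher fun n => ∑ x, glaisherWeight p x * x ^ n :=
  isGlaisher_sum_mul_pow
    (by rw [sum_glaisherWeight hp, two_mul, two_inv_add_two_inv_of_mod_three_eq_one hp])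
    fun _ hy => glaisherWeight_window_eq_zero hp hy

end GlaisherWeight

theorem exists_eq_prime_mul_div_of_cast_eq_mul {p : ℕ} [Fact p.Prime] {r : ℚ} {z : ℤ_[p]}
    (h : (r : ℚ_[p]) = p * z) : ∃ a b : ℤ, ¬ (p : ℤ) ∣ b ∧ r = p * (a / b) := by
  have hp0 : (p : ℚ) ≠ 0 := Nat.cast_ne_zero.mpr (Fact.out : p.Prime).ne_zero
  set q := r / p with hq
  have hqz : (q : ℚ_[p]) = z := by
    rw [hq, Rat.cast_div, h, Rat.cast_natCast, mul_div_cancel_left₀]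
    exact_mod_cast hp0
  have hden : ¬ p ∣ q.den := by
    rw [← Rat.padicValuation_le_one_iff, ← Padic.norm_rat_le_one_iff_padicValuation_le_one, hqz]
    exact z.norm_le_one
  refine ⟨q.num, q.den, by exact_mod_cast hden, ?_⟩
  rw [Int.cast_natCast, Rat.num_div_den, hq, mul_div_cancel₀ _ hp0]

/-- For a prime `p ≡ 1 (mod 3)`, the Glaisher number `G_{p−1}` is congruent to `0`
modulo `p`, where the Glaisher numbers are characterized by `G₀ = 1/2` and
`3·G_n + 2·Σ_{0 ≤ k < n, n−k even} C(n,k)·G_k = 0` for `n ≥ 1`. -/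
theorem prime_dvd_glaisher_number (p : ℕ) (hp : p.Prime) (hmod : p % 3 = 1)
    (G : ℕ → ℚ) (hG0 : G 0 = 1 / 2)
    (hGrec : ∀ n, 1 ≤ n →
      3 * G n + 2 * ∑ k ∈ (Finset.range n).filter (fun k => Even (n - k)),
        (n.choose k : ℚ) * G k = 0) :
    ∃ a b : ℤ, ¬ (p : ℤ) ∣ b ∧ G (p - 1) = (p : ℚ) * ((a : ℚ) / (b : ℚ)) := by
  have : Fact p.Prime := ⟨hp⟩
  have hunit {q : ℕ} (hq : q.Prime) (hqp : q ≠ p) : IsUnit (q : ℤ_[p]) := by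
    rw [PadicInt.isUnit_iff, PadicInt.norm_natCast_eq_one_iff]
    exact (Nat.coprime_primes hp hq).mpr hqp.symm
  have h2 : IsUnit (2 : ℤ_[p]) := by exact_mod_cast hunit Nat.prime_two (by omega)
  have h3 : IsUnit (3 : ℤ_[p]) := by exact_mod_cast hunit Nat.prime_three (by omega)
  have hGp : IsGlaisher fun n => (G n : ℚ_[p]) :=
    IsGlaisher.map ⟨by rw [hG0]; norm_num, hGrec⟩ (Rat.castHom ℚ_[p])
  let z : ℕ → ℤ_[p] := fun n => ⟨G n, hGp.mem_subring (T := PadicInt.subring p) h2 h3 n⟩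
  have hz : IsGlaisher z :=
    IsGlaisher.of_map (f := PadicInt.Coe.ringHom) Subtype.val_injective hGp
  have h3' : IsUnit (3 : ZMod p) := by simpa [map_ofNat] using h3.map PadicInt.toZMod
  have hres : PadicInt.toZMod ∘ z = fun n => ∑ x, glaisherWeight p x * x ^ n :=
    (hz.map _).unique (isGlaisher_sum_glaisherWeight_mul_pow hmod) h3'.isRegular.left
  have hdvd : (p : ℤ_[p]) ∣ z (p - 1) := by
    rw [← Ideal.mem_span_singleton, ← PadicInt.maximalIdeal_eq_span_p, ← PadicInt.ker_toZMod,
      RingHom.mem_ker]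
    exact (congrFun hres (p - 1)).trans (sum_glaisherWeight_mul_pow_sub_one hmod)
  obtain ⟨c, hc⟩ := hdvd
  exact exists_eq_prime_mul_div_of_cast_eq_mul (congrArg Subtype.val hc)
end

section
/- Let G : ℕ → ℚ be the sequence of Glaisher numbers. Then for every natural number n, B_{2n+1}(1/3) = −(2n+1)·G_{2n}/3^{2n+1}, where B_{2n+1}(x) is the (2n+1)-st Bernoulli polynomial. -/
/-!
Write `b k = 3^k B_k(1/3)` and `N = 2m + 1`. The addition formula for Bernoulli polynomials,
scaled by `3^N`, gives `∑ C(N,k) b_k = 3^N B_N(2/3) = -b_N` (reflection `x ↦ 1 - x`) and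
`∑ C(N,k) (-1)^(N-k) b_k = 3^N B_N = 0`. Adding the two isolates the odd indices:
`∑_{j<m} C(N, 2j+1) b_{2j+1} = -(3/2) b_N`. Since `C(2m+1, 2j+1)(2j+1) = (2m+1) C(2m, 2j)`,
this is exactly the Glaisher recursion at `2m` for the numbers `-b_{2j+1}/(2j+1)`, and strong
induction on `m` gives `b_{2m+1} = -(2m+1) G_{2m}`.
-/

open Finset

theorem Finset.sum_range_two_mul {M : Type*} [AddCommMonoid M] (f : ℕ → M) (m : ℕ) :
    ∑ k ∈ range (2 * m), f k = ∑ j ∈ range m, (f (2 * j) + f (2 * j + 1)) := by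
  induction m with
  | zero => simp
  | succ m ih =>
    rw [show 2 * (m + 1) = 2 * m + 1 + 1 by ring, sum_range_succ, sum_range_succ, ih,
      sum_range_succ, add_assoc]

theorem Finset.sum_filter_even_two_mul_sub {M : Type*} [AddCommMonoid M] (f : ℕ → M) (m : ℕ) :
    ∑ k ∈ (range (2 * m)).filter (fun k => Even (2 * m - k)), f k
      = ∑ j ∈ range m, f (2 * j) := by
  rw [sum_filter, sum_range_two_mul]
  refine sum_congr rfl fun j hj => ?_
  have hj : j < m := mem_range.mp hj
  rw [if_pos ⟨m - j, by omega⟩,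
    if_neg (by rw [Nat.not_even_iff_odd]; exact ⟨m - j - 1, by omega⟩), add_zero]

namespace Polynomial

theorem bernoulli_eval_eq_sum (N : ℕ) (x : ℚ) :
    (bernoulli N).eval x
      = ∑ i ∈ range (N + 1), (N.choose i : ℚ) * _root_.bernoulli i * x ^ (N - i) := by
  simp only [bernoulli, eval_finsetSum, eval_monomial]
  exact sum_congr rfl fun i _ => by ring

theorem bernoulli_eval_add (N : ℕ) (x y : ℚ) :
    (bernoulli N).eval (x + y)
      = ∑ k ∈ range (N + 1), (N.choose k : ℚ) * (bernoulli k).eval x * y ^ (N - k) := by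
  symm
  calc ∑ k ∈ range (N + 1), (N.choose k : ℚ) * (bernoulli k).eval x * y ^ (N - k)
      = ∑ k ∈ Ico 0 (N + 1), ∑ i ∈ Ico 0 (k + 1), (N.choose k : ℚ) *
          ((k.choose i : ℚ) * _root_.bernoulli i * x ^ (k - i)) * y ^ (N - k) := by
        simp only [← range_eq_Ico, bernoulli_eval_eq_sum, mul_sum, sum_mul]
    _ = ∑ i ∈ range (N + 1), ∑ k ∈ Ico i (N + 1), (N.choose k : ℚ) *
          ((k.choose i : ℚ) * _root_.bernoulli i * x ^ (k - i)) * y ^ (N - k) := by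
        rw [← sum_Ico_Ico_comm, range_eq_Ico]
    _ = ∑ i ∈ range (N + 1), (N.choose i : ℚ) * _root_.bernoulli i * (x + y) ^ (N - i) := by
        refine sum_congr rfl fun i hi => ?_
        have hi : i ≤ N := Nat.lt_succ_iff.mp (mem_range.mp hi)
        rw [sum_Ico_eq_sum_range, show N + 1 - i = N - i + 1 by omega, add_pow, mul_sum]
        refine sum_congr rfl fun j hj => ?_
        have hj : j ≤ N - i := Nat.lt_succ_iff.mp (mem_range.mp hj)
        have hchoose : (N.choose (i + j) : ℚ) * ((i + j).choose i : ℚ)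
            = (N.choose i : ℚ) * ((N - i).choose j : ℚ) := by
          have h := Nat.choose_mul (n := N) (show i ≤ i + j by omega)
          rw [Nat.add_sub_cancel_left] at h
          exact_mod_cast h
        rw [Nat.add_sub_cancel_left, show N - (i + j) = N - i - j by omega]
        linear_combination (_root_.bernoulli i * x ^ j * y ^ (N - i - j)) * hchoose
    _ = (bernoulli N).eval (x + y) := (bernoulli_eval_eq_sum N (x + y)).symm

theorem sum_choose_mul_pow_mul_bernoulli_eval (N : ℕ) (a x y : ℚ) :
    ∑ k ∈ range (N + 1), (N.choose k : ℚ) * (a ^ k * (bernoulli k).eval x) * (a * y) ^ (N - k)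
      = a ^ N * (bernoulli N).eval (x + y) := by
  rw [bernoulli_eval_add, mul_sum]
  refine sum_congr rfl fun k hk => ?_
  rw [mul_pow, ← Nat.sub_add_cancel (Nat.lt_succ_iff.mp (mem_range.mp hk)), pow_add,
    Nat.add_sub_cancel]
  ring

end Polynomial

open Polynomial in
theorem sum_choose_mul_bernoulli_eval_third_odd {m : ℕ} (hm : 1 ≤ m) :
    ∑ j ∈ range m, ((2 * m + 1).choose (2 * j + 1) : ℚ)
        * (3 ^ (2 * j + 1) * (Polynomial.bernoulli (2 * j + 1)).eval (1 / 3))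
      = -(3 / 2) * (3 ^ (2 * m + 1) * (Polynomial.bernoulli (2 * m + 1)).eval (1 / 3)) := by
  set N := 2 * m + 1
  set b : ℕ → ℚ := fun k => 3 ^ k * (Polynomial.bernoulli k).eval (1 / 3)
  have hN : Odd N := odd_two_mul_add_one m
  have hplus : ∑ k ∈ range (N + 1), (N.choose k : ℚ) * b k = -b N := by
    have h := sum_choose_mul_pow_mul_bernoulli_eval N 3 (1 / 3) (1 / 3)
    rw [show (1 / 3 + 1 / 3 : ℚ) = 1 - 1 / 3 by norm_num, bernoulli_eval_one_sub,
      hN.neg_one_pow] at h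
    simpa [b] using h
  have hminus : ∑ k ∈ range (N + 1), (N.choose k : ℚ) * b k * (-1) ^ (N - k) = 0 := by
    have h := sum_choose_mul_pow_mul_bernoulli_eval N 3 (1 / 3) (-(1 / 3))
    rw [add_neg_cancel, bernoulli_eval_zero, bernoulli_eq_zero_of_odd hN (by omega)] at h
    simpa [b] using h
  have hodd : ∑ j ∈ range (m + 1), 2 * ((N.choose (2 * j + 1) : ℚ) * b (2 * j + 1)) = -b N := by
    rw [← hplus, ← add_zero (∑ k ∈ range (N + 1), _), ← hminus, ← sum_add_distrib,
      show N + 1 = 2 * (m + 1) by omega, sum_range_two_mul]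
    refine sum_congr rfl fun j hj => ?_
    have hj : j < m + 1 := mem_range.mp hj
    rw [(show Odd (N - 2 * j) from ⟨m - j, by omega⟩).neg_one_pow,
      (show Even (N - (2 * j + 1)) from ⟨m - j, by omega⟩).neg_one_pow]
    ring
  rw [sum_range_succ, Nat.choose_self, ← mul_sum] at hodd
  push_cast at hodd
  linear_combination hodd / 2

theorem three_pow_mul_bernoulli_eval_third_eq (G : ℕ → ℚ) (hG0 : G 0 = 1 / 2)
    (hGrec : ∀ m, 1 ≤ m →
      3 * G (2 * m) + 2 * ∑ j ∈ range m, ((2 * m).choose (2 * j) : ℚ) * G (2 * j) = 0)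
    (m : ℕ) :
    3 ^ (2 * m + 1) * (Polynomial.bernoulli (2 * m + 1)).eval (1 / 3 : ℚ)
      = -(2 * m + 1) * G (2 * m) := by
  induction m using Nat.strong_induction_on with
  | _ m ih =>
  rcases Nat.eq_zero_or_pos m with rfl | hm
  · norm_num [Polynomial.bernoulli_one, hG0]
  have hsum : ∑ j ∈ range m, ((2 * m + 1).choose (2 * j + 1) : ℚ)
        * (3 ^ (2 * j + 1) * (Polynomial.bernoulli (2 * j + 1)).eval (1 / 3))
      = -(2 * m + 1) * ∑ j ∈ range m, ((2 * m).choose (2 * j) : ℚ) * G (2 * j) := by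
    rw [mul_sum]
    refine sum_congr rfl fun j hj => ?_
    have hchoose : ((2 * m + 1 : ℕ) : ℚ) * ((2 * m).choose (2 * j) : ℚ)
        = ((2 * m + 1).choose (2 * j + 1) : ℚ) * ((2 * j + 1 : ℕ) : ℚ) := by
      exact_mod_cast Nat.add_one_mul_choose_eq (2 * m) (2 * j)
    push_cast at hchoose
    rw [ih j (mem_range.mp hj)]
    linear_combination G (2 * j) * hchoose
  rw [sum_choose_mul_bernoulli_eval_third_odd hm] at hsum
  linear_combination -(2 / 3) * hsum + (2 * m + 1) / 3 * hGrec m hm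

/-- For every natural number `n`, `B_{2n+1}(1/3) = −(2n+1)·G_{2n}/3^{2n+1}`, where
`B_{2n+1}` is the `(2n+1)`-st Bernoulli polynomial and `G` is the sequence of Glaisher
numbers, characterized by `G₀ = 1/2` and
`3·G_n + 2·Σ_{0 ≤ k < n, n−k even} C(n,k)·G_k = 0` for `n ≥ 1`. -/
theorem bernoulli_poly_third_eq_glaisher (G : ℕ → ℚ) (hG0 : G 0 = 1 / 2)
    (hGrec : ∀ n, 1 ≤ n →
      3 * G n + 2 * ∑ k ∈ (Finset.range n).filter (fun k => Even (n - k)),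
        (n.choose k : ℚ) * G k = 0) (n : ℕ) :
    (Polynomial.bernoulli (2 * n + 1)).eval (1 / 3 : ℚ)
      = -(2 * n + 1 : ℚ) * G (2 * n) / 3 ^ (2 * n + 1) := by
  have hGrec_even (m : ℕ) (hm : 1 ≤ m) :
      3 * G (2 * m) + 2 * ∑ j ∈ range m, ((2 * m).choose (2 * j) : ℚ) * G (2 * j) = 0 := by
    simpa only [sum_filter_even_two_mul_sub] using hGrec (2 * m) (by omega)
  rw [eq_div_iff (by positivity), mul_comm]
  exact three_pow_mul_bernoulli_eval_third_eq G hG0 hGrec_even n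
end
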